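/- arXiv:2205.02216 — 2 statements merged into one kernel-verified Lean document; each statement's English description precedes it below -/
import Mathlib

section
/- Let m ≥ 1 and K = m². For the hierarchical topology α (m groups of m users; α_kk = g for k in group g; α_ij = g-1 if j is in group g and i is in a group of index ≤ g with i ≠ j; α_ij = 0 otherwise), the binary sum GDoF equals m: for every subset T ⊆ [K] of active users, Σ_{k∈T}(α_kk - max_{j∈T, j≠k} α_kj)^+ ≤ m, and this value is achieved (e.g., by activating all m users in a single group, or one user of group m). -/
open Finset

/-- Positive part `(x)^+ = max(x,0)`. -/
noncomputable def pPart (x : ℝ) : ℝ := max x 0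

/-- TIN GDoF of user `k` under topology `α` and power allocation `r`:
`d_k(α,r) = (α_kk + r_k - max_{j≠k} (α_kj + r_j)^+)^+` (max over the empty set is 0). -/
noncomputable def gdof {K : ℕ} (α : Fin K → Fin K → ℝ) (r : Fin K → ℝ) (k : Fin K) : ℝ :=
  pPart (α k k + r k -
    ((Finset.univ.erase k).fold max 0 fun j => pPart (α k j + r j)))

/-- Sum GDoF under allocation `r`. -/
noncomputable def sumGdof {K : ℕ} (α : Fin K → Fin K → ℝ) (r : Fin K → ℝ) : ℝ :=
  ∑ k, gdof α r k

/-- Optimal-power-control sum GDoF: supremum over all allocations with `r_k ≤ 0`. -/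
noncomputable def Dopt {K : ℕ} (α : Fin K → Fin K → ℝ) : ℝ :=
  sSup {x : ℝ | ∃ r : Fin K → ℝ, (∀ k, r k ≤ 0) ∧ x = sumGdof α r}

/-- Sum GDoF achieved by binary power control with active set `T`:
`Σ_{k∈T} (α_kk - max_{j∈T, j≠k} α_kj)^+` (max over the empty set is 0). -/
noncomputable def binSum {K : ℕ} (α : Fin K → Fin K → ℝ) (T : Finset (Fin K)) : ℝ :=
  ∑ k ∈ T, pPart (α k k - ((T.erase k).fold max 0 fun j => α k j))

/-- Binary-power-control sum GDoF: maximum over all subsets of active users. -/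
noncomputable def Dbin {K : ℕ} (α : Fin K → Fin K → ℝ) : ℝ :=
  (Finset.univ : Finset (Finset (Fin K))).sup' ⟨∅, Finset.mem_univ ∅⟩ (binSum α)

/-! A user whose level is below the top level present in `T` hears a top-level user at strength
at least its own signal and gets nothing. If the top level is held by one user, that user gets at
most its level, which is at most `m`; if it is shared, each top user is interfered with at strength
one below its signal and gets at most `1`, and a level holds at most `m` users. One user of the top
group alone attains `m`. -/

noncomputable def binGdof {K : ℕ} (α : Fin K → Fin K → ℝ) (T : Finset (Fin K)) (k : Fin K) : ℝ :=
  pPart (α k k - ((T.erase k).fold max 0 fun j => α k j))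

structure IsHierarchicalTopology {K : ℕ} (α : Fin K → Fin K → ℝ) (g : Fin K → ℕ) : Prop where
  diag : ∀ k, α k k = g k
  cross : ∀ i j, i ≠ j → α i j = if g i ≤ g j then (g j : ℝ) - 1 else 0

lemma pPart_nonneg (x : ℝ) : 0 ≤ pPart x := le_max_right x 0

lemma pPart_mono {x y : ℝ} (h : x ≤ y) : pPart x ≤ pPart y := max_le_max h le_rfl

lemma pPart_of_nonpos {x : ℝ} (h : x ≤ 0) : pPart x = 0 := max_eq_right h

lemma pPart_of_nonneg {x : ℝ} (h : 0 ≤ x) : pPart x = x := max_eq_left h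

section BinaryPowerControl

variable {K : ℕ} {α : Fin K → Fin K → ℝ} {T : Finset (Fin K)} {j k : Fin K}

lemma binGdof_le_pPart_diag : binGdof α T k ≤ pPart (α k k) :=
  pPart_mono <| sub_le_self _ <| (le_fold_max 0).2 <| Or.inl le_rfl

lemma binGdof_le_pPart_sub (hj : j ∈ T) (hjk : j ≠ k) :
    binGdof α T k ≤ pPart (α k k - α k j) :=
  pPart_mono <| sub_le_sub_left ((le_fold_max _).2 <| Or.inr ⟨j, mem_erase.2 ⟨hjk, hj⟩, le_rfl⟩) _

lemma binSum_singleton : binSum α {k} = pPart (α k k) := by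
  simp [binSum]

end BinaryPowerControl

namespace IsHierarchicalTopology

variable {K : ℕ} {α : Fin K → Fin K → ℝ} {g : Fin K → ℕ} {T : Finset (Fin K)} {j k : Fin K}

lemma apply_of_le (hα : IsHierarchicalTopology α g) (hjk : j ≠ k) (hle : g k ≤ g j) :
    α k j = (g j : ℝ) - 1 := by
  rw [hα.cross k j hjk.symm, if_pos hle]

lemma binGdof_le_level (hα : IsHierarchicalTopology α g) : binGdof α T k ≤ g k :=
  binGdof_le_pPart_diag.trans_eq <| by rw [hα.diag, pPart_of_nonneg (Nat.cast_nonneg _)]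

lemma binGdof_eq_zero_of_lt (hα : IsHierarchicalTopology α g) (hj : j ∈ T) (hlt : g k < g j) :
    binGdof α T k = 0 := by
  have hjk : j ≠ k := by rintro rfl; exact hlt.false
  have hlt' : (g k : ℝ) + 1 ≤ g j := by exact_mod_cast hlt
  refine le_antisymm ((binGdof_le_pPart_sub hj hjk).trans_eq (pPart_of_nonpos ?_)) (pPart_nonneg _)
  rw [hα.diag, hα.apply_of_le hjk hlt.le]
  linarith

lemma binGdof_le_one_of_level_eq (hα : IsHierarchicalTopology α g) (hj : j ∈ T) (hjk : j ≠ k)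
    (heq : g j = g k) : binGdof α T k ≤ 1 :=
  (binGdof_le_pPart_sub hj hjk).trans_eq <| by
    rw [hα.diag, hα.apply_of_le hjk heq.ge, heq, sub_sub_cancel, pPart_of_nonneg zero_le_one]

lemma binSum_eq_sum_top (hα : IsHierarchicalTopology α g) (hT : T.Nonempty) :
    binSum α T = ∑ k ∈ T with g k = T.sup' hT g, binGdof α T k := by
  obtain ⟨k₀, hk₀, hG⟩ := T.exists_mem_eq_sup' hT g
  refine (sum_filter_of_ne fun k hk hne => ?_).symm
  by_contra hk_top
  exact hne <| hα.binGdof_eq_zero_of_lt hk₀ <| hG ▸ lt_of_le_of_ne (le_sup' g hk) hk_top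

theorem binSum_le (hα : IsHierarchicalTopology α g) {n : ℕ} (hlevel : ∀ k, g k ≤ n)
    (hcard : ∀ c, #{k | g k = c} ≤ n) (T : Finset (Fin K)) : binSum α T ≤ n := by
  rcases T.eq_empty_or_nonempty with rfl | hT
  · simp [binSum]
  obtain ⟨k₀, hk₀, hG⟩ := T.exists_mem_eq_sup' hT g
  rw [hα.binSum_eq_sum_top hT]
  set S := T.filter (g · = T.sup' hT g)
  have hS : S.Nonempty := ⟨k₀, mem_filter.2 ⟨hk₀, hG.symm⟩⟩
  rcases hS.exists_eq_singleton_or_nontrivial with ⟨k, hSk⟩ | hS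
  · rw [hSk, sum_singleton]
    exact hα.binGdof_le_level.trans (by exact_mod_cast hlevel k)
  calc ∑ k ∈ S, binGdof α T k
      ≤ ∑ k ∈ S, (1 : ℝ) := sum_le_sum fun k hk => by
        obtain ⟨j, hj, hjk⟩ := hS.exists_ne k
        exact hα.binGdof_le_one_of_level_eq (mem_filter.1 hj).1 hjk
          ((mem_filter.1 hj).2.trans (mem_filter.1 hk).2.symm)
    _ = #S := by simp
    _ ≤ #{k | g k = T.sup' hT g} := by
        exact_mod_cast card_le_card (filter_subset_filter _ (subset_univ T))
    _ ≤ n := by exact_mod_cast hcard _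

end IsHierarchicalTopology

lemma card_le_of_div_eq {m : ℕ} {s : Finset (Fin (m * m))}
    (hs : ∀ a ∈ s, ∀ b ∈ s, a.val / m = b.val / m) : #s ≤ m := by
  rcases s.eq_empty_or_nonempty with rfl | ⟨k, -⟩
  · simp
  have hm : 0 < m := Nat.pos_of_mul_pos_left (k.val.zero_le.trans_lt k.isLt)
  refine (card_le_card_of_injOn (fun a => a.val % m) (t := range m)
    (fun a _ => mem_range.2 (Nat.mod_lt _ hm)) fun a ha b hb hab => Fin.ext ?_).trans_eq (card_range m)
  rw [← Nat.div_add_mod a.val m, ← Nat.div_add_mod b.val m, hs a ha b hb]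
  exact congrArg _ hab

theorem stmt_10_general (m : ℕ)
    (g : Fin (m * m) → ℕ) (hg : ∀ k, g k = k.val / m + 1)
    (α : Fin (m * m) → Fin (m * m) → ℝ)
    (hdiag : ∀ k, α k k = (g k : ℝ))
    (hcross : ∀ i j, i ≠ j → α i j = if g i ≤ g j then (g j : ℝ) - 1 else 0) :
    (∀ T : Finset (Fin (m * m)), binSum α T ≤ (m : ℝ)) ∧ Dbin α = (m : ℝ) := by
  have hα : IsHierarchicalTopology α g := ⟨hdiag, hcross⟩
  have hlevel : ∀ k, g k ≤ m := fun k => hg k ▸ Nat.div_lt_of_lt_mul k.isLt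
  have hcard : ∀ c, #{k | g k = c} ≤ m := fun c =>
    card_le_of_div_eq fun a ha b hb => by
      have := (mem_filter.1 ha).2.trans (mem_filter.1 hb).2.symm
      rw [hg, hg] at this
      omega
  have hub := hα.binSum_le hlevel hcard
  refine ⟨hub, le_antisymm (sup'_le _ _ fun T _ => hub T) ?_⟩
  rcases m.eq_zero_or_pos with rfl | hm
  · exact le_sup'_of_le _ (mem_univ ∅) (by simp [binSum])
  -- the first user of the top group
  let k : Fin (m * m) := ⟨(m - 1) * m, Nat.mul_lt_mul_of_pos_right (by omega) (by omega)⟩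
  have hk : g k = m := by rw [hg, Nat.mul_div_cancel _ (by omega)]; omega
  calc (m : ℝ) = binSum α {k} := by rw [binSum_singleton, hdiag, hk, pPart_of_nonneg m.cast_nonneg]
    _ ≤ Dbin α := le_sup' _ (mem_univ _)

/-- for the hierarchical topology with `m` groups of `m` users,
every active set `T` under binary power control achieves sum GDoF at most `m`,
and the binary sum GDoF equals `m`. -/
theorem stmt_10 (m : ℕ) (hm : 1 ≤ m)
    (g : Fin (m * m) → ℕ) (hg : ∀ k, g k = k.val / m + 1)
    (α : Fin (m * m) → Fin (m * m) → ℝ)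
    (hdiag : ∀ k, α k k = (g k : ℝ))
    (hcross : ∀ i j, i ≠ j → α i j = if g i ≤ g j then (g j : ℝ) - 1 else 0) :
    (∀ T : Finset (Fin (m * m)), binSum α T ≤ (m : ℝ)) ∧ Dbin α = (m : ℝ) :=
  stmt_10_general m g hg α hdiag hcross
end

section
/- Removing a user with zero GDoF does not decrease the OPC/BPC gain: let α be a K-user topology (K ≥ 2) and r a power allocation achieving D_{Σ,o}(α) with d_i(α,r) = 0 for some user i. Let α' be the (K-1)-user topology obtained by deleting row and column i of α. Then D_{Σ,o}(α') ≥ D_{Σ,o}(α) and D_{Σ,b}(α') ≤ D_{Σ,b}(α), so D_{Σ,o}(α)/D_{Σ,b}(α) ≤ D_{Σ,o}(α')/D_{Σ,b}(α') whenever D_{Σ,b}(α') > 0. -/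
/-!
Take an allocation `r` achieving `D_{Σ,o}(α)` in which user `i` gets no GDoF. Deleting user
`i` and keeping the powers of the others only removes an interferer from every remaining
user, so each remaining GDoF can only grow and `r` restricted to the others already achieves
at least `D_{Σ,o}(α)` for `α'`. Conversely every binary schedule of `α'` is a binary schedule
of `α` with the same sum GDoF. The ratio inequality follows from these two comparisons.
-/

open Finset

lemma fold_max_zero_nonneg {β : Type*} (s : Finset β) (f : β → ℝ) : 0 ≤ s.fold max 0 f :=
  (le_fold_max _).mpr (Or.inl le_rfl)

lemma fold_max_zero_mono {β : Type*} {s t : Finset β} (h : s ⊆ t) (f : β → ℝ) :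
    s.fold max 0 f ≤ t.fold max 0 f :=
  (fold_max_le _).mpr
    ⟨fold_max_zero_nonneg t f, fun x hx => (le_fold_max _).mpr (Or.inr ⟨x, h hx, le_rfl⟩)⟩

section GDoF

variable {K : ℕ} (α : Fin K → Fin K → ℝ)

lemma gdof_nonneg (r : Fin K → ℝ) (k : Fin K) : 0 ≤ gdof α r k := pPart_nonneg _

lemma gdof_le_diag {r : Fin K → ℝ} {k : Fin K} (hα : 0 ≤ α k k) (hr : r k ≤ 0) :
    gdof α r k ≤ α k k := by
  have hle := fold_max_zero_nonneg (univ.erase k) fun j => pPart (α k j + r j)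
  calc gdof α r k ≤ pPart (α k k) := pPart_mono (by linarith)
    _ = α k k := max_eq_left hα

lemma bddAbove_sumGdof (hα : ∀ k, 0 ≤ α k k) :
    BddAbove {x : ℝ | ∃ r : Fin K → ℝ, (∀ k, r k ≤ 0) ∧ x = sumGdof α r} := by
  refine ⟨∑ k, α k k, ?_⟩
  rintro _ ⟨r, hr, rfl⟩
  exact sum_le_sum fun k _ => gdof_le_diag α (hα k) (hr k)

lemma sumGdof_le_Dopt (hα : ∀ k, 0 ≤ α k k) {r : Fin K → ℝ} (hr : ∀ k, r k ≤ 0) :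
    sumGdof α r ≤ Dopt α :=
  le_csSup (bddAbove_sumGdof α hα) ⟨r, hr, rfl⟩

lemma Dopt_nonneg (hα : ∀ k, 0 ≤ α k k) : 0 ≤ Dopt α :=
  (sum_nonneg fun k _ => gdof_nonneg α 0 k).trans (sumGdof_le_Dopt α hα fun _ => le_rfl)

lemma gdof_le_gdof_comp {m : ℕ} (e : Fin m ↪ Fin K) (r : Fin K → ℝ) (k : Fin m) :
    gdof α r (e k) ≤ gdof (fun j l => α (e j) (e l)) (fun j => r (e j)) k := by
  have hsub : (univ.erase k).map e ⊆ univ.erase (e k) := by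
    rw [map_erase]
    exact erase_subset_erase _ (subset_univ _)
  have hfold := fold_max_zero_mono hsub fun j => pPart (α (e k) j + r j)
  rw [fold_map] at hfold
  exact pPart_mono (by unfold Function.comp at hfold; linarith)

lemma binSum_comp {m : ℕ} (e : Fin m ↪ Fin K) (T : Finset (Fin m)) :
    binSum (fun j l => α (e j) (e l)) T = binSum α (T.map e) := by
  rw [binSum, binSum, sum_map]
  refine sum_congr rfl fun k _ => ?_
  rw [← map_erase, fold_map]
  rfl

lemma Dbin_comp_le {m : ℕ} (e : Fin m ↪ Fin K) : Dbin (fun j l => α (e j) (e l)) ≤ Dbin α :=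
  sup'_le _ _ fun T _ => binSum_comp α e T ▸ le_sup' (binSum α) (mem_univ _)

end GDoF

lemma sumGdof_le_sumGdof_succAbove {n : ℕ} (α : Fin (n + 1) → Fin (n + 1) → ℝ)
    (r : Fin (n + 1) → ℝ) {i : Fin (n + 1)} (hi : gdof α r i = 0) :
    sumGdof α r ≤
      sumGdof (fun j k => α (i.succAbove j) (i.succAbove k)) (fun j => r (i.succAbove j)) := by
  rw [sumGdof, Fin.sum_univ_succAbove _ i, hi, zero_add]
  exact sum_le_sum fun k _ => gdof_le_gdof_comp α i.succAboveEmb r k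

theorem stmt_13_general (n : ℕ)
    (α : Fin (n + 1) → Fin (n + 1) → ℝ) (hα : ∀ i j, 0 ≤ α i j)
    (r : Fin (n + 1) → ℝ) (hr : ∀ k, r k ≤ 0)
    (hach : sumGdof α r = Dopt α) (i : Fin (n + 1)) (hi : gdof α r i = 0)
    (α' : Fin n → Fin n → ℝ)
    (hα' : ∀ j k : Fin n, α' j k = α (i.succAbove j) (i.succAbove k)) :
    Dopt α ≤ Dopt α' ∧ Dbin α' ≤ Dbin α ∧
    (0 < Dbin α' → Dopt α / Dbin α ≤ Dopt α' / Dbin α') := by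
  have hα'eq : α' = fun j k => α (i.succAbove j) (i.succAbove k) := funext₂ hα'
  have hdiag' : ∀ k, 0 ≤ α' k k := fun k => hα' k k ▸ hα _ _
  have hopt : Dopt α ≤ Dopt α' :=
    calc Dopt α = sumGdof α r := hach.symm
      _ ≤ sumGdof α' fun j => r (i.succAbove j) := by
        rw [hα'eq]; exact sumGdof_le_sumGdof_succAbove α r hi
      _ ≤ Dopt α' := sumGdof_le_Dopt α' hdiag' fun k => hr _
  have hbin : Dbin α' ≤ Dbin α := by
    rw [hα'eq]; exact Dbin_comp_le α i.succAboveEmb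
  exact ⟨hopt, hbin, fun hpos => div_le_div₀ (Dopt_nonneg α' hdiag') hopt hpos hbin⟩

/-- removing a user `i` with zero GDoF (in an allocation achieving
`D_{Σ,o}`) cannot decrease `D_{Σ,o}` nor increase `D_{Σ,b}`, hence cannot decrease
the OPC/BPC gain. -/
theorem stmt_13 (n : ℕ) (hn : 1 ≤ n)
    (α : Fin (n + 1) → Fin (n + 1) → ℝ) (hα : ∀ i j, 0 ≤ α i j)
    (r : Fin (n + 1) → ℝ) (hr : ∀ k, r k ≤ 0)
    (hach : sumGdof α r = Dopt α) (i : Fin (n + 1)) (hi : gdof α r i = 0)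
    (α' : Fin n → Fin n → ℝ)
    (hα' : ∀ j k : Fin n, α' j k = α (i.succAbove j) (i.succAbove k)) :
    Dopt α ≤ Dopt α' ∧ Dbin α' ≤ Dbin α ∧
    (0 < Dbin α' → Dopt α / Dbin α ≤ Dopt α' / Dbin α') :=
  stmt_13_general n α hα r hr hach i hi α' hα'
end
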